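/- Let ρ be a fixed density matrix on ℂ^N. Then the root fidelity map σ ↦ Tr √(√ρ σ √ρ) is concave on the convex set of density matrices on ℂ^N: for all density matrices σ₁, σ₂ and all t ∈ [0,1], Tr √(√ρ (t σ₁ + (1−t) σ₂) √ρ) ≥ t · Tr √(√ρ σ₁ √ρ) + (1−t) · Tr √(√ρ σ₂ √ρ). -/

import Mathlib

/-!
Trace-AM-GM: for `X > 0`, `2 Tr √A ≤ Tr X + Tr (A X⁻¹)`, with near-equality at `X = √A + δ`.
So `Tr √A` is an infimum of functions affine in `A`, hence concave on the PSD cone; the root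
fidelity is this concave map composed with the linear map `σ ↦ √ρ σ √ρ`.
-/

open Matrix
open scoped ComplexOrder

/-- The old Mathlib `Matrix.PosSemidef.sqrt` (removed upstream), restored with its
December 2024 definition. -/
noncomputable def Matrix.PosSemidef.sqrt {n : Type*} [Fintype n] [DecidableEq n]
    {A : Matrix n n ℂ} (hA : A.PosSemidef) : Matrix n n ℂ :=
  (hA.1.eigenvectorUnitary : Matrix n n ℂ) * diagonal ((↑) ∘ Real.sqrt ∘ hA.1.eigenvalues) *
    (star (hA.1.eigenvectorUnitary : Matrix n n ℂ))

/-- Positive-semidefinite square root of a matrix (zero if not PSD). -/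
noncomputable def psdSqrt {N : ℕ} (A : Matrix (Fin N) (Fin N) ℂ) :
    Matrix (Fin N) (Fin N) ℂ :=
  open scoped Classical in
  if h : A.PosSemidef then h.sqrt else 0

/-- Root fidelity `Tr √(√ρ σ √ρ)`. -/
noncomputable def rootFidelity {N : ℕ} (ρ σ : Matrix (Fin N) (Fin N) ℂ) : ℝ :=
  (psdSqrt (psdSqrt ρ * σ * psdSqrt ρ)).trace.re

/-- Fidelity `F(ρ,σ) = (Tr √(√ρ σ √ρ))²`. -/
noncomputable def fidelity {N : ℕ} (ρ σ : Matrix (Fin N) (Fin N) ℂ) : ℝ :=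
  (rootFidelity ρ σ) ^ 2

/-- A density matrix: positive semidefinite with trace one. -/
def IsDensityMatrix {N : ℕ} (ρ : Matrix (Fin N) (Fin N) ℂ) : Prop :=
  ρ.PosSemidef ∧ ρ.trace = 1

/-- A POVM: a family of PSD matrices summing to the identity. -/
def IsPOVM {N : ℕ} {C : Type*} [Fintype C] (M : C → Matrix (Fin N) (Fin N) ℂ) : Prop :=
  (∀ c, (M c).PosSemidef) ∧ ∑ c, M c = 1

/-- A Kraus family: `∑ Eₖᴴ Eₖ = I`. -/
def IsKrausFamily {N : ℕ} {K : Type*} [Fintype K] (E : K → Matrix (Fin N) (Fin N) ℂ) : Prop :=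
  ∑ k, (E k)ᴴ * E k = 1

/-- The quantum channel associated with a Kraus family. -/
noncomputable def channel {N : ℕ} {K : Type*} [Fintype K]
    (E : K → Matrix (Fin N) (Fin N) ℂ) (σ : Matrix (Fin N) (Fin N) ℂ) :
    Matrix (Fin N) (Fin N) ℂ :=
  ∑ k, E k * σ * (E k)ᴴ

/-- Minimum of `f` over all labels distinct from `cstar` (needs `|C| ≥ 2`). -/
noncomputable def minErase {C : Type*} [Fintype C] [DecidableEq C] {α : Type*} [LinearOrder α]
    (cstar : C) (h : 1 < Fintype.card C) (f : C → α) : α :=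
  (Finset.univ.erase cstar).inf'
    ((Finset.erase_nonempty (Finset.mem_univ cstar)).mpr
      (Finset.one_lt_card_iff_nontrivial.mp (by simpa [Finset.card_univ] using h))) f

namespace Matrix

variable {n : Type*} [Fintype n] [DecidableEq n] {A B X : Matrix n n ℂ}

namespace PosSemidef

lemma posSemidef_sqrt (hA : A.PosSemidef) : hA.sqrt.PosSemidef := by
  have hD : (diagonal ((↑) ∘ Real.sqrt ∘ hA.1.eigenvalues : n → ℂ)).PosSemidef :=
    PosSemidef.diagonal fun i => by
      simpa only [Function.comp_apply, Pi.zero_apply, Complex.zero_le_real] using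
        Real.sqrt_nonneg _
  have hUDU := hD.conjTranspose_mul_mul_same (star (hA.1.eigenvectorUnitary : Matrix n n ℂ))
  simpa [PosSemidef.sqrt, star_eq_conjTranspose] using hUDU

lemma sqrt_mul_self (hA : A.PosSemidef) : hA.sqrt * hA.sqrt = A := by
  set U : Matrix n n ℂ := ↑hA.1.eigenvectorUnitary
  set D : Matrix n n ℂ := diagonal ((↑) ∘ Real.sqrt ∘ hA.1.eigenvalues)
  have hUU : star U * U = 1 := Unitary.coe_star_mul_self _
  have hDD : D * D = diagonal ((↑) ∘ hA.1.eigenvalues) := by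
    rw [diagonal_mul_diagonal]
    congr 1
    funext i
    simp only [Function.comp_apply]
    rw [← Complex.ofReal_mul, Real.mul_self_sqrt (hA.eigenvalues_nonneg i)]
  have hspec := hA.1.spectral_theorem
  rw [Unitary.conjStarAlgAut_apply] at hspec
  calc U * D * star U * (U * D * star U) = U * (D * (star U * U) * D) * star U := by
        simp only [Matrix.mul_assoc]
    _ = A := by rw [hUU, Matrix.mul_one, hDD]; exact hspec.symm

lemma re_trace_mul_nonneg (hA : A.PosSemidef) (hB : B.PosSemidef) :
    0 ≤ (A * B).trace.re := by
  have hBAB := hA.conjTranspose_mul_mul_same hB.sqrt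
  rw [hB.posSemidef_sqrt.1.eq] at hBAB
  have htr : (hB.sqrt * A * hB.sqrt).trace = (A * B).trace := by
    rw [trace_mul_cycle, hB.sqrt_mul_self, trace_mul_comm]
  rw [← htr]
  exact (Complex.nonneg_iff.mp hBAB.trace_nonneg).1

lemma two_mul_re_trace_sqrt_le (hA : A.PosSemidef) (hX : X.PosDef) :
    2 * hA.sqrt.trace.re ≤ X.trace.re + (A * X⁻¹).trace.re := by
  set S := hA.sqrt
  have hS : Sᴴ = S := hA.posSemidef_sqrt.1.eq
  obtain ⟨C, hCh, hCC⟩ : ∃ C : Matrix n n ℂ, Cᴴ = C ∧ C * C = X :=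
    ⟨_, hX.posSemidef.posSemidef_sqrt.1.eq, hX.posSemidef.sqrt_mul_self⟩
  have hC : IsUnit C.det :=
    (isUnit_iff_isUnit_det C).mp (isUnit_of_mul_isUnit_left (hCC ▸ hX.isUnit))
  have hXinv : X⁻¹ = C⁻¹ * C⁻¹ := by rw [← hCC, Matrix.mul_inv_rev]
  -- expand `0 ≤ Tr (C - C⁻¹ S)ᴴ (C - C⁻¹ S)` with `C = √X`
  have hsq : (C - C⁻¹ * S)ᴴ * (C - C⁻¹ * S) = X - S - S + S * X⁻¹ * S := by
    rw [conjTranspose_sub, conjTranspose_mul, conjTranspose_nonsing_inv, hCh, hS, hXinv,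
      ← hCC]
    simp only [sub_mul, mul_sub, Matrix.mul_assoc, mul_nonsing_inv_cancel_left _ _ hC,
      nonsing_inv_mul _ hC, Matrix.mul_one]
    abel
  have htr : (S * X⁻¹ * S).trace = (A * X⁻¹).trace := by
    rw [trace_mul_cycle, hA.sqrt_mul_self]
  have h0 :=
    (Complex.nonneg_iff.mp (posSemidef_conjTranspose_mul_self (C - C⁻¹ * S)).trace_nonneg).1
  rw [hsq, trace_add, trace_sub, trace_sub, htr] at h0
  simp only [Complex.add_re, Complex.sub_re] at h0
  linarith

lemma posDef_sqrt_add_smul_one (hA : A.PosSemidef) {δ : ℝ} (hδ : 0 < δ) :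
    (hA.sqrt + δ • (1 : Matrix n n ℂ)).PosDef :=
  PosDef.posSemidef_add hA.posSemidef_sqrt (PosDef.one.smul hδ)

lemma re_trace_mul_inv_sqrt_add_smul_one_le (hA : A.PosSemidef) {δ : ℝ} (hδ : 0 < δ) :
    (A * (hA.sqrt + δ • (1 : Matrix n n ℂ))⁻¹).trace.re ≤ hA.sqrt.trace.re := by
  set S := hA.sqrt
  set X := S + δ • (1 : Matrix n n ℂ)
  have hX : X.PosDef := hA.posDef_sqrt_add_smul_one hδ
  have hXX : S * X⁻¹ + δ • X⁻¹ = 1 := by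
    rw [← mul_nonsing_inv X ((isUnit_iff_isUnit_det X).mp hX.isUnit)]
    simp only [X, Matrix.add_mul, smul_mul_assoc, Matrix.one_mul]
  have hdiff : S - A * X⁻¹ = δ • (S * X⁻¹) := by
    calc S - A * X⁻¹ = S * (1 - S * X⁻¹) := by
          rw [mul_sub, Matrix.mul_one, ← hA.sqrt_mul_self, Matrix.mul_assoc]
      _ = δ • (S * X⁻¹) := by rw [← eq_sub_of_add_eq' hXX, mul_smul_comm]
  have hre := congrArg (fun M : Matrix n n ℂ => M.trace.re) hdiff
  simp only [trace_sub, trace_smul, Complex.sub_re, Complex.smul_re, smul_eq_mul] at hre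
  nlinarith [hA.posSemidef_sqrt.re_trace_mul_nonneg hX.inv.posSemidef]

lemma le_re_trace_sqrt_of_forall_posDef (hA : A.PosSemidef) {c : ℝ}
    (h : ∀ X : Matrix n n ℂ, X.PosDef → 2 * c ≤ X.trace.re + (A * X⁻¹).trace.re) :
    c ≤ hA.sqrt.trace.re := by
  refine le_of_forall_pos_le_add fun ε hε => ?_
  set δ := ε / (Fintype.card n + 1)
  have hδ : 0 < δ := by positivity
  have hδn : δ * Fintype.card n ≤ ε := by
    rw [div_mul_eq_mul_div, div_le_iff₀ (by positivity)]
    nlinarith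
  have hc := h _ (hA.posDef_sqrt_add_smul_one hδ)
  have hup := hA.re_trace_mul_inv_sqrt_add_smul_one_le hδ
  simp only [trace_add, trace_smul, trace_one, Complex.add_re, Complex.smul_re, smul_eq_mul,
    Complex.natCast_re] at hc
  linarith

end PosSemidef

end Matrix

lemma Matrix.convex_setOf_posSemidef {n : Type*} :
    Convex ℝ {A : Matrix n n ℂ | A.PosSemidef} :=
  fun _ hA _ hB _ _ ha hb _ => (hA.smul ha).add (hB.smul hb)

lemma psdSqrt_eq_sqrt {N : ℕ} {A : Matrix (Fin N) (Fin N) ℂ} (hA : A.PosSemidef) :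
    psdSqrt A = hA.sqrt :=
  dif_pos hA

lemma posSemidef_psdSqrt {N : ℕ} (A : Matrix (Fin N) (Fin N) ℂ) : (psdSqrt A).PosSemidef := by
  unfold psdSqrt
  split_ifs with hA
  exacts [hA.posSemidef_sqrt, .zero]

lemma concaveOn_re_trace_psdSqrt {N : ℕ} :
    ConcaveOn ℝ {A : Matrix (Fin N) (Fin N) ℂ | A.PosSemidef} fun A => (psdSqrt A).trace.re := by
  refine ⟨convex_setOf_posSemidef, fun A hA B hB a b ha hb hab => ?_⟩
  have hAB : (a • A + b • B).PosSemidef := convex_setOf_posSemidef hA hB ha hb hab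
  simp only [psdSqrt_eq_sqrt hA, psdSqrt_eq_sqrt hB, psdSqrt_eq_sqrt hAB, smul_eq_mul]
  refine hAB.le_re_trace_sqrt_of_forall_posDef fun X hX => ?_
  have hAX := hA.two_mul_re_trace_sqrt_le hX
  have hBX := hB.two_mul_re_trace_sqrt_le hX
  have hlin : ((a • A + b • B) * X⁻¹).trace.re =
      a * (A * X⁻¹).trace.re + b * (B * X⁻¹).trace.re := by
    simp only [Matrix.add_mul, smul_mul_assoc, trace_add, trace_smul, Complex.add_re,
      Complex.smul_re, smul_eq_mul]
  have hXab : a * X.trace.re + b * X.trace.re = X.trace.re := by rw [← add_mul, hab, one_mul]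
  rw [hlin]
  nlinarith [mul_le_mul_of_nonneg_left hAX ha, mul_le_mul_of_nonneg_left hBX hb]

theorem rootFidelity_concave_general
    {N : ℕ} (ρ : Matrix (Fin N) (Fin N) ℂ)
    (σ₁ σ₂ : Matrix (Fin N) (Fin N) ℂ)
    (h₁ : IsDensityMatrix σ₁) (h₂ : IsDensityMatrix σ₂)
    (t : ℝ) (ht0 : 0 ≤ t) (ht1 : t ≤ 1) :
    t * rootFidelity ρ σ₁ + (1 - t) * rootFidelity ρ σ₂ ≤
      rootFidelity ρ ((t : ℂ) • σ₁ + ((1 - t : ℝ) : ℂ) • σ₂) := by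
  unfold rootFidelity
  set R := psdSqrt ρ
  have hR : Rᴴ = R := (posSemidef_psdSqrt ρ).1.eq
  have hconj : ∀ {σ : Matrix (Fin N) (Fin N) ℂ}, σ.PosSemidef → (R * σ * R).PosSemidef :=
    fun hσ => by simpa only [hR] using hσ.conjTranspose_mul_mul_same R
  have hmix : R * ((t : ℂ) • σ₁ + ((1 - t : ℝ) : ℂ) • σ₂) * R =
      t • (R * σ₁ * R) + (1 - t) • (R * σ₂ * R) := by
    simp only [Complex.coe_smul, mul_add, Matrix.add_mul, mul_smul_comm, smul_mul_assoc]
  rw [hmix]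
  exact concaveOn_re_trace_psdSqrt.2 (hconj h₁.1) (hconj h₂.1) ht0 (sub_nonneg.mpr ht1)
    (add_sub_cancel t 1)

/-- **Concavity of the root fidelity** in its second argument: for a fixed density
matrix ρ, σ ↦ Tr √(√ρ σ √ρ) is concave on the set of density matrices. -/
theorem rootFidelity_concave
    {N : ℕ} (ρ : Matrix (Fin N) (Fin N) ℂ) (hρ : IsDensityMatrix ρ)
    (σ₁ σ₂ : Matrix (Fin N) (Fin N) ℂ)
    (h₁ : IsDensityMatrix σ₁) (h₂ : IsDensityMatrix σ₂)
    (t : ℝ) (ht0 : 0 ≤ t) (ht1 : t ≤ 1) :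
    t * rootFidelity ρ σ₁ + (1 - t) * rootFidelity ρ σ₂ ≤
      rootFidelity ρ ((t : ℂ) • σ₁ + ((1 - t : ℝ) : ℂ) • σ₂) :=
  rootFidelity_concave_general ρ σ₁ σ₂ h₁ h₂ t ht0 ht1
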